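/- arXiv:2212.02039 — 3 statements merged into one kernel-verified Lean document; each statement's English description precedes it below -/
import Mathlib

section
/- If a smooth function μ₁ : (0,π) → ℝ satisfies the ODE cot(θ)·μ₁'(θ) + μ₁''(θ) = 0 on (0,π) and extends continuously to [0,π], then μ₁ is constant. -/
open Set Real

lemma const_of_hasDerivAt_zero' {f : ℝ → ℝ} {s : Set ℝ} (hs : Convex ℝ s) (ho : IsOpen s)
    (h : ∀ x ∈ s, HasDerivAt f 0 x) : ∀ x ∈ s, ∀ y ∈ s, f x = f y := by
  intro x hx y hy
  apply hs.is_const_of_fderivWithin_eq_zero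
    (fun z hz => ((h z hz).differentiableAt).differentiableWithinAt) ?_ hx hy
  intro z hz
  rw [fderivWithin_of_isOpen ho hz, (h z hz).hasFDerivAt.fderiv]
  ext; simp

/-- If a smooth function `μ₁` on `(0, π)` satisfies `cot θ · μ₁'(θ) + μ₁''(θ) = 0`
and extends continuously to `[0, π]`, then `μ₁` is constant. -/
theorem monopole_hair_constant (μ₁ : ℝ → ℝ)
    (hsmooth : ContDiffOn ℝ (⊤ : ℕ∞) μ₁ (Ioo 0 π))
    (hODE : ∀ θ ∈ Ioo 0 π,
      Real.cos θ / Real.sin θ * deriv μ₁ θ + deriv (deriv μ₁) θ = 0)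
    (hcont : ContinuousOn μ₁ (Icc 0 π)) :
    ∃ c : ℝ, ∀ θ ∈ Icc 0 π, μ₁ θ = c := by
  have hopen : IsOpen (Ioo (0:ℝ) π) := isOpen_Ioo
  have hconv : Convex ℝ (Ioo (0:ℝ) π) := convex_Ioo _ _
  have hmid : (π/2) ∈ Ioo (0:ℝ) π := ⟨by positivity, by linarith [pi_pos]⟩
  have hdiff1 : ∀ x ∈ Ioo (0:ℝ) π, HasDerivAt μ₁ (deriv μ₁ x) x := by
    intro x hx
    exact ((hsmooth.differentiableOn (by simp)).differentiableAt (hopen.mem_nhds hx)).hasDerivAt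
  have hsmooth' : ContDiffOn ℝ (⊤ : ℕ∞) (deriv μ₁) (Ioo 0 π) :=
    hsmooth.deriv_of_isOpen hopen (by simp)
  have hdiff2 : ∀ x ∈ Ioo (0:ℝ) π, HasDerivAt (deriv μ₁) (deriv (deriv μ₁) x) x := by
    intro x hx
    exact ((hsmooth'.differentiableOn (by simp)).differentiableAt (hopen.mem_nhds hx)).hasDerivAt
  have hsinpos : ∀ x ∈ Ioo (0:ℝ) π, 0 < Real.sin x :=
    fun x hx => Real.sin_pos_of_pos_of_lt_pi hx.1 hx.2
  have hcospos : ∀ x ∈ Ioo (0:ℝ) π, (0:ℝ) < 1 + Real.cos x := by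
    intro x hx
    have : Real.cos π < Real.cos x :=
      Real.strictAntiOn_cos ⟨hx.1.le, hx.2.le⟩ (right_mem_Icc.2 pi_pos.le) hx.2
    rw [Real.cos_pi] at this
    linarith
  -- g := sin * deriv μ₁ has zero derivative on (0,π)
  set g : ℝ → ℝ := fun θ => Real.sin θ * deriv μ₁ θ with hg
  have hgderiv : ∀ x ∈ Ioo (0:ℝ) π, HasDerivAt g 0 x := by
    intro x hx
    have h1 := (Real.hasDerivAt_sin x).mul (hdiff2 x hx)
    have hsx := (hsinpos x hx).ne'
    have hode := hODE x hx
    have key : Real.cos x * deriv μ₁ x + Real.sin x * deriv (deriv μ₁) x = 0 := by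
      field_simp at hode
      nlinarith [hode]
    rw [key] at h1
    exact h1
  set C : ℝ := g (π/2) with hC
  have hgconst : ∀ x ∈ Ioo (0:ℝ) π, Real.sin x * deriv μ₁ x = C :=
    fun x hx => const_of_hasDerivAt_zero' hconv hopen hgderiv x hx _ hmid
  -- L := log(sin/(1+cos)) has derivative 1/sin
  set u : ℝ → ℝ := fun θ => Real.sin θ / (1 + Real.cos θ) with hu
  have hupos : ∀ x ∈ Ioo (0:ℝ) π, 0 < u x :=
    fun x hx => div_pos (hsinpos x hx) (hcospos x hx)
  have huderiv : ∀ x ∈ Ioo (0:ℝ) π, HasDerivAt u (1 / (1 + Real.cos x)) x := by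
    intro x hx
    have h1 := (Real.hasDerivAt_sin x).div
      ((hasDerivAt_const x (1:ℝ)).add (Real.hasDerivAt_cos x)) (hcospos x hx).ne'
    replace h1 : HasDerivAt u ((Real.cos x * (1 + Real.cos x) - Real.sin x * (0 + -Real.sin x)) / (1 + Real.cos x) ^ 2) x := h1
    convert h1 using 1
    have hs := Real.sin_sq_add_cos_sq x
    have hnum : Real.cos x * (1 + Real.cos x) - Real.sin x * (0 + -Real.sin x) = 1 + Real.cos x := by
      nlinarith [hs]
    rw [hnum, sq]
    field_simp
  set L : ℝ → ℝ := fun θ => Real.log (u θ) with hL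
  have hLderiv : ∀ x ∈ Ioo (0:ℝ) π, HasDerivAt L (1 / Real.sin x) x := by
    intro x hx
    have := (huderiv x hx).log (hupos x hx).ne'
    convert this using 1
    rw [hu]
    have h1 := (hsinpos x hx).ne'
    have h2 := (hcospos x hx).ne'
    field_simp
  -- F := μ₁ - C • L is constant on (0,π)
  set F : ℝ → ℝ := fun θ => μ₁ θ - C * L θ with hF
  have hFderiv : ∀ x ∈ Ioo (0:ℝ) π, HasDerivAt F 0 x := by
    intro x hx
    have h1 := (hdiff1 x hx).sub ((hLderiv x hx).const_mul C)
    have hsx := (hsinpos x hx).ne'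
    have : deriv μ₁ x - C * (1 / Real.sin x) = 0 := by
      have hgc := hgconst x hx
      field_simp
      linarith [hgc, mul_comm (Real.sin x) (deriv μ₁ x)]
    rwa [this] at h1
  set D : ℝ := F (π/2) with hD
  have hFconst : ∀ x ∈ Ioo (0:ℝ) π, μ₁ x - C * L x = D :=
    fun x hx => const_of_hasDerivAt_zero' hconv hopen hFderiv x hx _ hmid
  -- the filter at 0 within (0,π) is nontrivial
  haveI hNB : (nhdsWithin (0:ℝ) (Ioo 0 π)).NeBot := by
    apply mem_closure_iff_nhdsWithin_neBot.mp
    rw [closure_Ioo pi_pos.ne]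
    exact ⟨le_refl 0, pi_pos.le⟩
  -- μ₁ tends to μ₁ 0 along this filter
  have hmu0 : Filter.Tendsto μ₁ (nhdsWithin 0 (Ioo 0 π)) (nhds (μ₁ 0)) := by
    have h0 : (0:ℝ) ∈ Icc (0:ℝ) π := ⟨le_refl 0, pi_pos.le⟩
    exact ((hcont 0 h0).mono Ioo_subset_Icc_self)
  -- L tends to -∞
  have hLbot : Filter.Tendsto L (nhdsWithin 0 (Ioo 0 π)) Filter.atBot := by
    apply Filter.Tendsto.comp Real.tendsto_log_nhdsGT_zero
    rw [tendsto_nhdsWithin_iff]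
    constructor
    · have : Filter.Tendsto u (nhdsWithin 0 (Ioo 0 π)) (nhds (u 0)) := by
        apply Filter.Tendsto.mono_left _ nhdsWithin_le_nhds
        have hca : ContinuousAt u 0 := by
          apply ContinuousAt.div Real.continuous_sin.continuousAt
            (continuous_const.add Real.continuous_cos).continuousAt
          simp [Real.cos_zero]
        exact hca
      simpa [hu, Real.sin_zero, Real.cos_zero] using this
    · exact Filter.eventually_of_mem self_mem_nhdsWithin (fun x hx => hupos x hx)
  -- hence C = 0
  have hC0 : C = 0 := by
    by_contra hne
    have hCL : Filter.Tendsto (fun θ => C * L θ) (nhdsWithin 0 (Ioo 0 π)) (nhds (μ₁ 0 - D)) := by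
      have : Filter.Tendsto (fun θ => μ₁ θ - D) (nhdsWithin 0 (Ioo 0 π)) (nhds (μ₁ 0 - D)) :=
        hmu0.sub tendsto_const_nhds
      apply this.congr'
      exact Filter.eventually_of_mem self_mem_nhdsWithin
        (fun x hx => by rw [← hFconst x hx]; ring)
    rcases lt_or_gt_of_ne hne with hneg | hpos
    · have : Filter.Tendsto (fun θ => C * L θ) (nhdsWithin 0 (Ioo 0 π)) Filter.atTop :=
        hLbot.const_mul_atBot_of_neg hneg
      exact not_tendsto_nhds_of_tendsto_atTop this _ hCL
    · have : Filter.Tendsto (fun θ => C * L θ) (nhdsWithin 0 (Ioo 0 π)) Filter.atBot :=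
        hLbot.const_mul_atBot hpos
      exact not_tendsto_nhds_of_tendsto_atBot this _ hCL
  -- μ₁ = D on (0,π)
  have hmuD : ∀ x ∈ Ioo (0:ℝ) π, μ₁ x = D := by
    intro x hx
    have := hFconst x hx
    rw [hC0] at this
    linarith
  refine ⟨D, fun θ hθ => ?_⟩
  rcases eq_or_lt_of_le hθ.1 with h0 | h0
  · -- θ = 0
    subst h0
    have : Filter.Tendsto μ₁ (nhdsWithin (0:ℝ) (Ioo 0 π)) (nhds D) := by
      apply Filter.Tendsto.congr' _ (tendsto_const_nhds (α := ℝ))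
      exact Filter.eventually_of_mem self_mem_nhdsWithin (fun x hx => (hmuD x hx).symm)
    exact tendsto_nhds_unique hmu0 this
  rcases eq_or_lt_of_le hθ.2 with hpi | hpi
  · -- θ = π
    haveI hNBπ : (nhdsWithin π (Ioo (0:ℝ) π)).NeBot := by
      apply mem_closure_iff_nhdsWithin_neBot.mp
      rw [closure_Ioo pi_pos.ne]
      exact ⟨pi_pos.le, le_refl π⟩
    have hmupi : Filter.Tendsto μ₁ (nhdsWithin π (Ioo 0 π)) (nhds (μ₁ π)) :=
      (hcont π (right_mem_Icc.2 pi_pos.le)).mono Ioo_subset_Icc_self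
    have hD' : Filter.Tendsto μ₁ (nhdsWithin π (Ioo (0:ℝ) π)) (nhds D) := by
      apply Filter.Tendsto.congr' _ (tendsto_const_nhds (α := ℝ))
      exact Filter.eventually_of_mem self_mem_nhdsWithin (fun x hx => (hmuD x hx).symm)
    rw [hpi]
    exact tendsto_nhds_unique hmupi hD'
  · exact hmuD θ ⟨h0, hpi⟩
end

section
/- Let M, μ₁ be real constants. Every solution μ₂ : (0,π) → ℝ of the ODE cot(θ)·μ₂'(θ) + μ₂''(θ) + 2μ₂(θ) − 2M·μ₁ = 0 that extends continuously to [0,π] has the form μ₂(θ) = M·μ₁ + c·cos(θ) for some constant c. -/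
open Set Real Filter

lemma blowup_aux {f f' : ℝ → ℝ} {K B b : ℝ} (hb : 0 < b) (hK : 0 < K) (hB : 0 ≤ B)
    (hdiff : ∀ x ∈ Ioo (0:ℝ) b, HasDerivAt f (f' x) x)
    (hcont : ContinuousOn f' (Ioo (0:ℝ) b))
    (hlow : ∀ x ∈ Ioo (0:ℝ) b, K / x - B ≤ f' x)
    (hbd : ∀ x ∈ Ioo (0:ℝ) b, |f x| ≤ B) : False := by
  set a : ℝ := min (b/4) (Real.exp (Real.log (b/2) - (3*B + B*b + 1)/K)) with ha_def
  have ha0 : 0 < a := lt_min (by linarith) (Real.exp_pos _)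
  have hab : a < b/2 := lt_of_le_of_lt (min_le_left _ _) (by linarith)
  have hsub : Icc a (b/2) ⊆ Ioo 0 b := fun x hx => ⟨lt_of_lt_of_le ha0 hx.1, by
    rcases hx with ⟨_, h2⟩; linarith⟩
  have huIcc : uIcc a (b/2) = Icc a (b/2) := uIcc_of_le hab.le
  have hint : IntervalIntegrable f' MeasureTheory.volume a (b/2) := by
    apply ContinuousOn.intervalIntegrable
    rw [huIcc]; exact hcont.mono hsub
  have hftc : ∫ x in a..(b/2), f' x = f (b/2) - f a := by
    apply intervalIntegral.integral_eq_sub_of_hasDerivAt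
    · intro x hx; rw [huIcc] at hx; exact hdiff x (hsub hx)
    · exact hint
  have hne : ∀ x ∈ uIcc a (b/2), x ≠ 0 := by
    intro x hx; rw [huIcc] at hx; exact (lt_of_lt_of_le ha0 hx.1).ne'
  have hgcont : ContinuousOn (fun x => K / x - B) (uIcc a (b/2)) := by
    apply ContinuousOn.sub _ continuousOn_const
    exact continuousOn_const.div continuousOn_id hne
  have hgint : IntervalIntegrable (fun x => K / x - B) MeasureTheory.volume a (b/2) :=
    hgcont.intervalIntegrable
  have hmono : (∫ x in a..(b/2), (K / x - B)) ≤ ∫ x in a..(b/2), f' x := by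
    apply intervalIntegral.integral_mono_on hab.le hgint hint
    intro x hx; exact hlow x (hsub hx)
  have h0not : (0:ℝ) ∉ uIcc a (b/2) := fun h => (hne 0 h) rfl
  have hval : (∫ x in a..(b/2), (K / x - B))
      = K * (Real.log (b/2) - Real.log a) - B * (b/2 - a) := by
    rw [intervalIntegral.integral_sub (by
        apply ContinuousOn.intervalIntegrable
        exact continuousOn_const.div continuousOn_id hne) intervalIntegrable_const]
    rw [intervalIntegral.integral_const]
    have : (∫ x in a..(b/2), K / x) = K * Real.log (b/2 / a) := by
      simp_rw [div_eq_mul_inv K]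
      rw [intervalIntegral.integral_const_mul, integral_inv h0not]
    rw [this, Real.log_div (by linarith) ha0.ne', smul_eq_mul]
    ring
  have hloga : Real.log a ≤ Real.log (b/2) - (3*B + B*b + 1)/K := by
    calc Real.log a ≤ Real.log (Real.exp (Real.log (b/2) - (3*B + B*b + 1)/K)) :=
          Real.log_le_log ha0 (min_le_right _ _)
      _ = _ := Real.log_exp _
  have hKlog : 3*B + B*b + 1 ≤ K * (Real.log (b/2) - Real.log a) := by
    have h1 : (3*B + B*b + 1)/K ≤ Real.log (b/2) - Real.log a := by linarith
    calc 3*B + B*b + 1 = K * ((3*B + B*b + 1)/K) := by field_simp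
      _ ≤ K * (Real.log (b/2) - Real.log a) := mul_le_mul_of_nonneg_left h1 hK.le
  have hb2 : b/2 ∈ Ioo (0:ℝ) b := ⟨by linarith, by linarith⟩
  have ha' : a ∈ Ioo (0:ℝ) b := ⟨ha0, by linarith⟩
  have h1 := abs_le.1 (hbd _ hb2)
  have h2 := abs_le.1 (hbd _ ha')
  have hBb : B * (b/2 - a) ≤ B * b := by nlinarith
  rw [hftc, hval] at hmono
  linarith

lemma const_on_of_hasDerivAt_zero {g : ℝ → ℝ} {s : Set ℝ} (hs : IsOpen s) (hconv : Convex ℝ s)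
    (h : ∀ x ∈ s, HasDerivAt g 0 x) {x y : ℝ} (hx : x ∈ s) (hy : y ∈ s) : g x = g y := by
  apply hconv.is_const_of_fderivWithin_eq_zero
    (fun z hz => ((h z hz).differentiableAt).differentiableWithinAt) ?_ hx hy
  intro z hz
  rw [fderivWithin_of_isOpen hs hz, ((h z hz).hasFDerivAt).fderiv]
  exact ContinuousLinearMap.ext fun u => by simp

/-- Every smooth solution `μ₂` on `(0, π)` of
`cot θ · μ₂'(θ) + μ₂''(θ) + 2 μ₂(θ) − 2 M μ₁ = 0`
that extends continuously to `[0, π]` has the form `μ₂(θ) = M μ₁ + c cos θ`. -/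
theorem dipole_hair_form (M μ₁ : ℝ) (μ₂ : ℝ → ℝ)
    (hsmooth : ContDiffOn ℝ (⊤ : ℕ∞) μ₂ (Ioo 0 π))
    (hODE : ∀ θ ∈ Ioo 0 π,
      Real.cos θ / Real.sin θ * deriv μ₂ θ + deriv (deriv μ₂) θ
        + 2 * μ₂ θ - 2 * M * μ₁ = 0)
    (hcont : ContinuousOn μ₂ (Icc 0 π)) :
    ∃ c : ℝ, ∀ θ ∈ Icc 0 π, μ₂ θ = M * μ₁ + c * Real.cos θ := by
  have hpi : 0 < π := Real.pi_pos
  have hpi3 : (3:ℝ) < π := Real.pi_gt_three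
  have hmem : π/2 ∈ Ioo (0:ℝ) π := ⟨by linarith, by linarith⟩
  -- basic differentiability
  have hdiff1 : ∀ θ ∈ Ioo 0 π, HasDerivAt μ₂ (deriv μ₂ θ) θ := fun θ hθ =>
    ((hsmooth.differentiableOn (by simp)).differentiableAt (isOpen_Ioo.mem_nhds hθ)).hasDerivAt
  have hsm1 : ContDiffOn ℝ 1 (deriv μ₂) (Ioo 0 π) :=
    hsmooth.deriv_of_isOpen isOpen_Ioo (by exact WithTop.coe_le_coe.2 le_top)
  have hdiff2 : ∀ θ ∈ Ioo 0 π, HasDerivAt (deriv μ₂) (deriv (deriv μ₂) θ) θ := fun θ hθ =>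
    ((hsm1.differentiableOn one_ne_zero).differentiableAt (isOpen_Ioo.mem_nhds hθ)).hasDerivAt
  have hcd : ContinuousOn (deriv μ₂) (Ioo 0 π) := hsm1.continuousOn
  -- the first integral W
  set W : ℝ → ℝ := fun θ =>
    Real.sin θ * Real.cos θ * deriv μ₂ θ + Real.sin θ ^ 2 * (μ₂ θ - M * μ₁) with hW_def
  have hWd : ∀ θ ∈ Ioo 0 π, HasDerivAt W 0 θ := by
    intro θ hθ
    have hs : Real.sin θ ≠ 0 := (Real.sin_pos_of_pos_of_lt_pi hθ.1 hθ.2).ne'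
    have hd1 := hdiff1 θ hθ
    have hd2 := hdiff2 θ hθ
    have hA : HasDerivAt (fun x => Real.sin x * Real.cos x * deriv μ₂ x)
        ((Real.cos θ * Real.cos θ + Real.sin θ * -Real.sin θ) * deriv μ₂ θ
          + Real.sin θ * Real.cos θ * deriv (deriv μ₂) θ) θ :=
      ((Real.hasDerivAt_sin θ).mul (Real.hasDerivAt_cos θ)).mul hd2
    have hB : HasDerivAt (fun x => Real.sin x ^ 2 * (μ₂ x - M * μ₁))
        (((2:ℕ) * Real.sin θ ^ (2-1) * Real.cos θ) * (μ₂ θ - M * μ₁)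
          + Real.sin θ ^ 2 * deriv μ₂ θ) θ :=
      ((Real.hasDerivAt_sin θ).pow 2).mul (hd1.sub_const _)
    have hsum := hA.add hB
    have h0 : Real.cos θ * deriv μ₂ θ =
        Real.sin θ * (2 * M * μ₁ - deriv (deriv μ₂) θ - 2 * μ₂ θ) := by
      have h1 : Real.cos θ / Real.sin θ * deriv μ₂ θ
          = 2 * M * μ₁ - deriv (deriv μ₂) θ - 2 * μ₂ θ := by
        have := hODE θ hθ; linarith
      rw [← h1]; field_simp
    refine hsum.congr_deriv ?_
    push_cast
    linear_combination (Real.cos θ) * h0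
  have hWc : ∀ θ ∈ Ioo 0 π, W θ = W (π/2) := fun θ hθ =>
    const_on_of_hasDerivAt_zero isOpen_Ioo (convex_Ioo _ _) hWd hθ hmem
  have hWpi2 : W (π/2) = μ₂ (π/2) - M * μ₁ := by
    simp [hW_def]
  -- the constant K := μ₂(π/2) - M μ₁ vanishes, by regularity at θ = 0
  obtain ⟨B, hBbd⟩ := isCompact_Icc.exists_bound_of_continuousOn
    (hcont.sub (continuousOn_const (c := M * μ₁)))
  have hBbd' : ∀ x ∈ Icc (0:ℝ) π, |μ₂ x - M * μ₁| ≤ B := by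
    intro x hx; have := hBbd x hx; rwa [Real.norm_eq_abs] at this
  have hB0 : 0 ≤ B := le_trans (abs_nonneg _) (hBbd' 0 ⟨le_refl 0, hpi.le⟩)
  have hsub34 : Ioo (0:ℝ) (3/4) ⊆ Ioo 0 π := fun x hx => ⟨hx.1, by
    rcases hx with ⟨_, h2⟩; linarith⟩
  have hsub34' : Ioo (0:ℝ) (3/4) ⊆ Icc 0 π := fun x hx =>
    ⟨(hx.1).le, by rcases hx with ⟨_, h2⟩; linarith⟩
  -- pointwise facts on (0, 3/4)
  have hfacts : ∀ x ∈ Ioo (0:ℝ) (3/4),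
      0 < Real.sin x ∧ 0 < Real.cos x ∧ Real.sin x ≤ Real.cos x ∧
        Real.sin x * Real.cos x ≤ x ∧
        Real.sin x * Real.cos x * deriv μ₂ x + Real.sin x ^ 2 * (μ₂ x - M * μ₁)
          = μ₂ (π/2) - M * μ₁ := by
    intro x hx
    obtain ⟨hx0, hx34⟩ := hx
    have hxpi4 : x < π/4 := by linarith
    have hs : 0 < Real.sin x := Real.sin_pos_of_pos_of_lt_pi hx0 (by linarith)
    have hc : 0 < Real.cos x := Real.cos_pos_of_mem_Ioo ⟨by linarith, by linarith⟩
    have hsc : Real.sin x ≤ Real.cos x := by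
      have h1 : Real.sin x < Real.sin (π/4) :=
        Real.strictMonoOn_sin ⟨by linarith, by linarith⟩ ⟨by linarith, by linarith⟩ hxpi4
      have h2 : Real.cos (π/4) < Real.cos x :=
        Real.cos_lt_cos_of_nonneg_of_le_pi hx0.le (by linarith) hxpi4
      rw [Real.sin_pi_div_four] at h1
      rw [Real.cos_pi_div_four] at h2
      linarith
    have hsx : Real.sin x < x := Real.sin_lt hx0
    have hscx : Real.sin x * Real.cos x ≤ x := by nlinarith [Real.cos_le_one x]
    have hW := hWc x (hsub34 ⟨hx0, hx34⟩)
    rw [hWpi2] at hW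
    exact ⟨hs, hc, hsc, hscx, hW⟩
  have hK0 : μ₂ (π/2) - M * μ₁ = 0 := by
    by_contra hK
    rcases lt_or_gt_of_ne hK with hKneg | hKpos
    · -- K < 0 : apply blowup to -(μ₂ - Mμ₁)
      apply blowup_aux (f := fun x => -(μ₂ x - M * μ₁)) (f' := fun x => -(deriv μ₂ x))
        (K := -(μ₂ (π/2) - M * μ₁)) (B := B) (b := 3/4)
        (by norm_num) (by linarith) hB0
      · intro x hx; exact (((hdiff1 x (hsub34 hx)).sub_const _)).neg
      · exact (hcd.mono hsub34).neg
      · intro x hx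
        obtain ⟨hs, hc, hsc, hscx, hW⟩ := hfacts x hx
        set K := μ₂ (π/2) - M * μ₁
        have hf' : deriv μ₂ x = K / (Real.sin x * Real.cos x)
            - Real.sin x / Real.cos x * (μ₂ x - M * μ₁) := by
          rw [eq_sub_iff_add_eq, ← hW]
          field_simp
        have e1 : (-K)/x ≤ (-K)/(Real.sin x * Real.cos x) := by
          apply div_le_div_of_nonneg_left (by linarith) (by positivity) hscx
        have habs := abs_le.1 (hBbd' x (hsub34' hx))
        have ht1 : Real.sin x / Real.cos x ≤ 1 := div_le_one_of_le₀ hsc hc.le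
        have ht0 : 0 ≤ Real.sin x / Real.cos x := by positivity
        have e2 : -B ≤ Real.sin x / Real.cos x * (μ₂ x - M * μ₁) := by nlinarith
        have na : (-K)/x = -(K/x) := neg_div _ _
        have nb : (-K)/(Real.sin x * Real.cos x) = -(K/(Real.sin x * Real.cos x)) := neg_div _ _
        show -K / x - B ≤ -(deriv μ₂ x)
        rw [hf']
        linarith
      · intro x hx
        rw [abs_neg]; exact hBbd' x (hsub34' hx)
    · -- K > 0
      apply blowup_aux (f := fun x => μ₂ x - M * μ₁) (f' := deriv μ₂)
        (K := μ₂ (π/2) - M * μ₁) (B := B) (b := 3/4)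
        (by norm_num) hKpos hB0
      · intro x hx; exact (hdiff1 x (hsub34 hx)).sub_const _
      · exact hcd.mono hsub34
      · intro x hx
        obtain ⟨hs, hc, hsc, hscx, hW⟩ := hfacts x hx
        set K := μ₂ (π/2) - M * μ₁
        have hf' : deriv μ₂ x = K / (Real.sin x * Real.cos x)
            - Real.sin x / Real.cos x * (μ₂ x - M * μ₁) := by
          rw [eq_sub_iff_add_eq, ← hW]
          field_simp
        have e1 : K/x ≤ K/(Real.sin x * Real.cos x) :=
          div_le_div_of_nonneg_left hKpos.le (by positivity) hscx
        have habs := abs_le.1 (hBbd' x (hsub34' hx))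
        have ht1 : Real.sin x / Real.cos x ≤ 1 := div_le_one_of_le₀ hsc hc.le
        have ht0 : 0 ≤ Real.sin x / Real.cos x := by positivity
        have e2 : Real.sin x / Real.cos x * (μ₂ x - M * μ₁) ≤ B := by nlinarith
        rw [hf']; linarith
      · intro x hx; exact hBbd' x (hsub34' hx)
  -- now W ≡ 0, hence cos·μ₂' + sin·(μ₂ - Mμ₁) = 0 on (0,π)
  have hrel : ∀ θ ∈ Ioo 0 π,
      Real.cos θ * deriv μ₂ θ + Real.sin θ * (μ₂ θ - M * μ₁) = 0 := by
    intro θ hθ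
    have hs : Real.sin θ ≠ 0 := (Real.sin_pos_of_pos_of_lt_pi hθ.1 hθ.2).ne'
    have h := hWc θ hθ
    rw [hWpi2, hK0] at h
    simp only [hW_def] at h
    have h2 : Real.sin θ * (Real.cos θ * deriv μ₂ θ + Real.sin θ * (μ₂ θ - M * μ₁)) = 0 := by
      linear_combination h
    exact (mul_eq_zero.1 h2).resolve_left hs
  -- on each half, (μ₂ - Mμ₁)/cos is constant
  have hgd : ∀ θ ∈ Ioo 0 π, Real.cos θ ≠ 0 →
      HasDerivAt (fun x => (μ₂ x - M * μ₁) / Real.cos x) 0 θ := by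
    intro θ hθ hcne
    have h := ((hdiff1 θ hθ).sub_const (M * μ₁)).div (Real.hasDerivAt_cos θ) hcne
    refine h.congr_deriv ?_
    rw [div_eq_zero_iff]
    left
    linear_combination hrel θ hθ
  set c₁ : ℝ := (μ₂ (π/4) - M * μ₁) / Real.cos (π/4) with hc1_def
  set c₂ : ℝ := (μ₂ (3*π/4) - M * μ₁) / Real.cos (3*π/4) with hc2_def
  have hleft : ∀ θ ∈ Ioo 0 (π/2), μ₂ θ - M * μ₁ = c₁ * Real.cos θ := by
    intro θ hθ
    have hcθ : (0:ℝ) < Real.cos θ := Real.cos_pos_of_mem_Ioo ⟨by linarith [hθ.1], hθ.2⟩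
    have h := const_on_of_hasDerivAt_zero isOpen_Ioo (convex_Ioo (0:ℝ) (π/2))
      (fun x hx => hgd x ⟨hx.1, by linarith [hx.2]⟩
        (Real.cos_pos_of_mem_Ioo ⟨by linarith [hx.1], hx.2⟩).ne')
      hθ (show π/4 ∈ Ioo (0:ℝ) (π/2) from ⟨by linarith, by linarith⟩)
    rw [div_eq_iff hcθ.ne'] at h
    exact h
  have hright : ∀ θ ∈ Ioo (π/2) π, μ₂ θ - M * μ₁ = c₂ * Real.cos θ := by
    intro θ hθ
    have hcθ : Real.cos θ < 0 := Real.cos_neg_of_pi_div_two_lt_of_lt hθ.1 (by linarith [hθ.2])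
    have h := const_on_of_hasDerivAt_zero isOpen_Ioo (convex_Ioo (π/2) π)
      (fun x hx => hgd x ⟨by linarith [hx.1], hx.2⟩
        (Real.cos_neg_of_pi_div_two_lt_of_lt hx.1 (by linarith [hx.2])).ne)
      hθ (show 3*π/4 ∈ Ioo (π/2) π from ⟨by linarith, by linarith⟩)
    rw [div_eq_iff hcθ.ne] at h
    exact h
  -- match the two constants via the derivative at π/2
  have hdv : HasDerivAt (fun θ => μ₂ θ - M * μ₁) (deriv μ₂ (π/2)) (π/2) :=
    (hdiff1 _ hmem).sub_const _
  have hptL : c₁ * Real.cos (π/2) = μ₂ (π/2) - M * μ₁ := by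
    rw [Real.cos_pi_div_two, hK0]; ring
  have hmatch1 : c₁ * -Real.sin (π/2) = deriv μ₂ (π/2) := by
    have hev : (fun θ => c₁ * Real.cos θ) =ᶠ[nhdsWithin (π/2) (Iio (π/2))]
        (fun θ => μ₂ θ - M * μ₁) := by
      filter_upwards [Ioo_mem_nhdsLT (show (0:ℝ) < π/2 by linarith)] with x hx
      exact (hleft x hx).symm
    have h1 : HasDerivWithinAt (fun θ => c₁ * Real.cos θ) (deriv μ₂ (π/2)) (Iio (π/2)) (π/2) :=
      (hdv.hasDerivWithinAt).congr_of_eventuallyEq hev hptL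
    have h2 : HasDerivWithinAt (fun θ => c₁ * Real.cos θ) (c₁ * -Real.sin (π/2))
        (Iio (π/2)) (π/2) := ((Real.hasDerivAt_cos _).const_mul c₁).hasDerivWithinAt
    rw [← h1.derivWithin (uniqueDiffWithinAt_Iio _), ← h2.derivWithin (uniqueDiffWithinAt_Iio _)]
  have hptR : c₂ * Real.cos (π/2) = μ₂ (π/2) - M * μ₁ := by
    rw [Real.cos_pi_div_two, hK0]; ring
  have hmatch2 : c₂ * -Real.sin (π/2) = deriv μ₂ (π/2) := by
    have hev : (fun θ => c₂ * Real.cos θ) =ᶠ[nhdsWithin (π/2) (Ioi (π/2))]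
        (fun θ => μ₂ θ - M * μ₁) := by
      filter_upwards [Ioo_mem_nhdsGT (show π/2 < π by linarith)] with x hx
      exact (hright x hx).symm
    have h1 : HasDerivWithinAt (fun θ => c₂ * Real.cos θ) (deriv μ₂ (π/2)) (Ioi (π/2)) (π/2) :=
      (hdv.hasDerivWithinAt).congr_of_eventuallyEq hev hptR
    have h2 : HasDerivWithinAt (fun θ => c₂ * Real.cos θ) (c₂ * -Real.sin (π/2))
        (Ioi (π/2)) (π/2) := ((Real.hasDerivAt_cos _).const_mul c₂).hasDerivWithinAt
    rw [← h1.derivWithin (uniqueDiffWithinAt_Ioi _), ← h2.derivWithin (uniqueDiffWithinAt_Ioi _)]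
  have hc12 : c₁ = c₂ := by
    have := hmatch1.trans hmatch2.symm
    rw [Real.sin_pi_div_two] at this
    linarith
  -- equality on the open interval
  have hIoo : ∀ θ ∈ Ioo 0 π, μ₂ θ = M * μ₁ + c₁ * Real.cos θ := by
    intro θ hθ
    rcases lt_trichotomy θ (π/2) with h | h | h
    · have := hleft θ ⟨hθ.1, h⟩; linarith
    · subst h; rw [Real.cos_pi_div_two]; linarith [hK0]
    · have := hright θ ⟨h, hθ.2⟩; rw [hc12]; linarith
  -- extend to the endpoints by continuity
  refine ⟨c₁, fun θ hθ => ?_⟩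
  rcases eq_or_lt_of_le hθ.1 with h0 | h0
  · -- θ = 0
    subst h0
    have hcl : (0:ℝ) ∈ closure (Ioo (0:ℝ) π) := by
      rw [closure_Ioo hpi.ne]; exact ⟨le_refl _, hpi.le⟩
    have hne : (nhdsWithin (0:ℝ) (Ioo 0 π)).NeBot := mem_closure_iff_nhdsWithin_neBot.1 hcl
    have t1 : Tendsto μ₂ (nhdsWithin (0:ℝ) (Ioo 0 π)) (nhds (μ₂ 0)) :=
      (hcont 0 ⟨le_refl _, hpi.le⟩).mono_left (nhdsWithin_mono _ Ioo_subset_Icc_self)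
    have t2 : Tendsto (fun θ => M * μ₁ + c₁ * Real.cos θ) (nhdsWithin (0:ℝ) (Ioo 0 π))
        (nhds (M * μ₁ + c₁ * Real.cos 0)) :=
      ((continuous_const.add (continuous_const.mul Real.continuous_cos)).tendsto 0).mono_left
        nhdsWithin_le_nhds
    have heq : μ₂ =ᶠ[nhdsWithin (0:ℝ) (Ioo 0 π)] (fun θ => M * μ₁ + c₁ * Real.cos θ) := by
      filter_upwards [self_mem_nhdsWithin] with x hx
      exact hIoo x hx
    exact tendsto_nhds_unique (t1.congr' heq) t2
  rcases eq_or_lt_of_le hθ.2 with h1 | h1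
  · -- θ = π
    rw [h1]
    have hcl : π ∈ closure (Ioo (0:ℝ) π) := by
      rw [closure_Ioo hpi.ne]; exact ⟨hpi.le, le_refl _⟩
    have hne : (nhdsWithin π (Ioo (0:ℝ) π)).NeBot := mem_closure_iff_nhdsWithin_neBot.1 hcl
    have t1 : Tendsto μ₂ (nhdsWithin π (Ioo (0:ℝ) π)) (nhds (μ₂ π)) :=
      (hcont π ⟨hpi.le, le_refl _⟩).mono_left (nhdsWithin_mono _ Ioo_subset_Icc_self)
    have t2 : Tendsto (fun θ => M * μ₁ + c₁ * Real.cos θ) (nhdsWithin π (Ioo (0:ℝ) π))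
        (nhds (M * μ₁ + c₁ * Real.cos π)) :=
      ((continuous_const.add (continuous_const.mul Real.continuous_cos)).tendsto π).mono_left
        nhdsWithin_le_nhds
    have heq : μ₂ =ᶠ[nhdsWithin π (Ioo (0:ℝ) π)] (fun θ => M * μ₁ + c₁ * Real.cos θ) := by
      filter_upwards [self_mem_nhdsWithin] with x hx
      exact hIoo x hx
    exact tendsto_nhds_unique (t1.congr' heq) t2
  · exact hIoo θ ⟨h0, h1⟩
end

section
/- Let R*R(r,θ) = 96 M³ r χ cos(θ)·(3M⁴χ⁴cos⁴θ − 10M²r²χ²cos²θ + 3r⁴)/(M²χ²cos²θ + r²)⁶ be the Kerr Pontryagin density (M > 0, 0 < χ < 1), and let φ₀(r,θ) = (r−M)cos(θ). Then with r₊ = M(1+√(1−χ²)), the integral (1/4π)∫_{r₊}^∞∫_0^π∫_0^{2π} R*R(r,θ)·φ₀(r,θ)·(M²χ²cos²θ + r²)·sin(θ) dφ dθ dr equals (2/χ³)·(2χ⁴ + (2√(1−χ²) − 3)χ² − 2√(1−χ²) + 2). -/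
/-!
Write `A = M²χ²` for the square of the Kerr spin parameter. The `φ`-integral only contributes
`2π`. After `u = cos θ` the angular integrand becomes a multiple of
`u² (3A²u⁴ − 10Ar²u² + 3r⁴) / (Au² + r²)⁵`, the derivative of `u³ (r² − Au²) / (Au² + r²)⁴`,
so the angular integral is `2 (r² − A) / (r² + A)⁴` up to that factor. The resulting radial
integrand `r (r − M) (r² − A) / (r² + A)⁴` is the derivative of
`−(4r³ − 3Mr² + MA) / (12 (r² + A)³)`, which vanishes at infinity and is evaluated at the horizon
with `r₊² + A = 2Mr₊`.
-/

open Set Real MeasureTheory Filter Topology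

theorem integral_comp_cos_mul_sin {g : ℝ → ℝ} (hg : ContinuousOn g (Icc (-1) 1)) :
    ∫ θ in (0 : ℝ)..π, g (cos θ) * sin θ = ∫ u in (-1 : ℝ)..1, g u := by
  have hmaps : cos '' uIcc 0 π ⊆ Icc (-1) 1 := by
    rintro _ ⟨θ, -, rfl⟩
    exact ⟨neg_one_le_cos θ, cos_le_one θ⟩
  have h := intervalIntegral.integral_comp_mul_deriv' (fun θ _ => hasDerivAt_cos θ)
    continuous_sin.neg.continuousOn (hg.mono hmaps)
  simp only [Function.comp_def, mul_neg, intervalIntegral.integral_neg, cos_zero, cos_pi] at h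
  rw [← neg_inj, h, intervalIntegral.integral_symm]

noncomputable section

def angularDensity (A r u : ℝ) : ℝ :=
  u ^ 2 * (3 * A ^ 2 * u ^ 4 - 10 * A * r ^ 2 * u ^ 2 + 3 * r ^ 4) / (A * u ^ 2 + r ^ 2) ^ 5

def angularPrimitive (A r u : ℝ) : ℝ := u ^ 3 * (r ^ 2 - A * u ^ 2) / (A * u ^ 2 + r ^ 2) ^ 4

def radialDensity (A M r : ℝ) : ℝ := r * (r - M) * (r ^ 2 - A) / (r ^ 2 + A) ^ 4

def radialPrimitive (A M r : ℝ) : ℝ :=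
  -(4 * r ^ 3 - 3 * M * r ^ 2 + M * A) / (12 * (r ^ 2 + A) ^ 3)

end

section Angular

variable {A r : ℝ}

theorem hasDerivAt_angularPrimitive (hA : 0 ≤ A) (hr : r ≠ 0) (u : ℝ) :
    HasDerivAt (angularPrimitive A r) (angularDensity A r u) u := by
  have hsq := hasDerivAt_pow 2 u
  have hden : 0 < A * u ^ 2 + r ^ 2 := by positivity
  refine (((hasDerivAt_pow 3 u).fun_mul ((hsq.const_mul A).const_sub (r ^ 2))).fun_div
    (((hsq.const_mul A).add_const (r ^ 2)).fun_pow 4) (pow_ne_zero 4 hden.ne')).congr_deriv ?_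
  rw [angularDensity]
  field_simp
  ring

theorem continuous_angularDensity (hA : 0 ≤ A) (hr : r ≠ 0) :
    Continuous (angularDensity A r) :=
  Continuous.div (by fun_prop) (by fun_prop) fun u => pow_ne_zero 5 (by positivity)

theorem integral_angularDensity (hA : 0 ≤ A) (hr : r ≠ 0) :
    ∫ u in (-1 : ℝ)..1, angularDensity A r u = 2 * (r ^ 2 - A) / (r ^ 2 + A) ^ 4 := by
  rw [intervalIntegral.integral_eq_sub_of_hasDerivAt
    (fun u _ => hasDerivAt_angularPrimitive hA hr u)
    ((continuous_angularDensity hA hr).intervalIntegrable _ _), angularPrimitive, angularPrimitive]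
  ring

end Angular

theorem integral_pontryagin_angular (M χ r : ℝ) (hr : r ≠ 0) :
    ∫ θ in (0 : ℝ)..π, ∫ _φ in (0 : ℝ)..(2 * π),
          (96 * M ^ 3 * r * χ * Real.cos θ *
              (3 * M ^ 4 * χ ^ 4 * Real.cos θ ^ 4
                - 10 * M ^ 2 * r ^ 2 * χ ^ 2 * Real.cos θ ^ 2
                + 3 * r ^ 4) /
            (M ^ 2 * χ ^ 2 * Real.cos θ ^ 2 + r ^ 2) ^ 6) *
            ((r - M) * Real.cos θ) *
            (M ^ 2 * χ ^ 2 * Real.cos θ ^ 2 + r ^ 2) * Real.sin θ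
      = 384 * π * M ^ 3 * χ * radialDensity (M ^ 2 * χ ^ 2) M r := by
  have hA : 0 ≤ M ^ 2 * χ ^ 2 := by positivity
  have hintegrand : ∀ θ, ∫ _φ in (0 : ℝ)..(2 * π),
          (96 * M ^ 3 * r * χ * Real.cos θ *
              (3 * M ^ 4 * χ ^ 4 * Real.cos θ ^ 4
                - 10 * M ^ 2 * r ^ 2 * χ ^ 2 * Real.cos θ ^ 2
                + 3 * r ^ 4) /
            (M ^ 2 * χ ^ 2 * Real.cos θ ^ 2 + r ^ 2) ^ 6) *
            ((r - M) * Real.cos θ) *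
            (M ^ 2 * χ ^ 2 * Real.cos θ ^ 2 + r ^ 2) * Real.sin θ
        = 192 * π * M ^ 3 * χ * r * (r - M) *
            (angularDensity (M ^ 2 * χ ^ 2) r (cos θ) * sin θ) := by
    intro θ
    have hden : M ^ 2 * χ ^ 2 * cos θ ^ 2 + r ^ 2 ≠ 0 := by positivity
    rw [intervalIntegral.integral_const, smul_eq_mul, angularDensity]
    field_simp
    ring
  simp only [hintegrand, intervalIntegral.integral_const_mul,
    integral_comp_cos_mul_sin (continuous_angularDensity hA hr).continuousOn,
    integral_angularDensity hA hr, radialDensity]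
  ring

section Radial

variable {A M : ℝ}

theorem hasDerivAt_radialPrimitive (hA : 0 < A) (r : ℝ) :
    HasDerivAt (radialPrimitive A M) (radialDensity A M r) r := by
  have hsq := hasDerivAt_pow 2 r
  have hden : 0 < r ^ 2 + A := by positivity
  refine ((((((hasDerivAt_pow 3 r).const_mul 4).fun_sub (hsq.const_mul (3 * M))).add_const
    (M * A)).fun_neg).fun_div (((hsq.add_const A).fun_pow 3).const_mul 12)
    (by positivity)).congr_deriv ?_
  rw [radialDensity]
  field_simp
  ring

theorem radialDensity_nonneg {r : ℝ} (hM : 0 ≤ M) (hAM : A ≤ M ^ 2) (hr : M ≤ r) :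
    0 ≤ radialDensity A M r := by
  have hrA : 0 ≤ r ^ 2 - A := by nlinarith
  exact div_nonneg (mul_nonneg (mul_nonneg (hM.trans hr) (sub_nonneg.2 hr)) hrA) (by positivity)

theorem tendsto_radialPrimitive_atTop (hA : 0 ≤ A) :
    Tendsto (radialPrimitive A M) atTop (𝓝 0) := by
  set G : ℝ → ℝ := fun y =>
    -(4 * y ^ 3 - 3 * M * y ^ 4 + M * A * y ^ 6) / (12 * (1 + A * y ^ 2) ^ 3)
  have hG : Tendsto G (𝓝 0) (𝓝 0) := by
    have : ContinuousAt G 0 := ContinuousAt.div (by fun_prop) (by fun_prop) (by norm_num)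
    simpa [G] using this.tendsto
  refine (hG.comp tendsto_inv_atTop_zero).congr' ?_
  filter_upwards [eventually_gt_atTop 0] with x hx
  have hden : 0 < x ^ 2 + A := by positivity
  simp only [Function.comp, G, radialPrimitive]
  field_simp

theorem integral_Ioi_radialDensity {a : ℝ} (hA : 0 < A) (hM : 0 ≤ M) (hAM : A ≤ M ^ 2)
    (ha : M ≤ a) : ∫ r in Ioi a, radialDensity A M r = -radialPrimitive A M a := by
  rw [integral_Ioi_of_hasDerivAt_of_nonneg' (fun r _ => hasDerivAt_radialPrimitive hA r)
    (fun r hr => radialDensity_nonneg hM hAM (ha.trans hr.le))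
    (tendsto_radialPrimitive_atTop hA.le), zero_sub]

end Radial

/-- First-order DCS dipole hair of a Kerr black hole: integrating the Kerr
Pontryagin density against the homogeneous solution `φ₀ = (r − M) cos θ` and
the Boyer–Lindquist volume factor `(M²χ²cos²θ + r²) sin θ` over the exterior
`r ≥ r₊ = M(1 + √(1−χ²))` yields
`(2/χ³)(2χ⁴ + (2√(1−χ²) − 3)χ² − 2√(1−χ²) + 2)`. -/
theorem dcs_dipole_hair_kerr (M χ : ℝ) (hM : 0 < M) (hχ0 : 0 < χ) (hχ1 : χ < 1) :
    (1 / (4 * π)) *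
      (∫ r in Ioi (M * (1 + Real.sqrt (1 - χ ^ 2))),
        ∫ θ in (0 : ℝ)..π, ∫ _φ in (0 : ℝ)..(2 * π),
          (96 * M ^ 3 * r * χ * Real.cos θ *
              (3 * M ^ 4 * χ ^ 4 * Real.cos θ ^ 4
                - 10 * M ^ 2 * r ^ 2 * χ ^ 2 * Real.cos θ ^ 2
                + 3 * r ^ 4) /
            (M ^ 2 * χ ^ 2 * Real.cos θ ^ 2 + r ^ 2) ^ 6) *
            ((r - M) * Real.cos θ) *
            (M ^ 2 * χ ^ 2 * Real.cos θ ^ 2 + r ^ 2) * Real.sin θ)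
      = (2 / χ ^ 3) * (2 * χ ^ 4 + (2 * Real.sqrt (1 - χ ^ 2) - 3) * χ ^ 2
          - 2 * Real.sqrt (1 - χ ^ 2) + 2) := by
  set s := √(1 - χ ^ 2)
  have hs2 : s ^ 2 = 1 - χ ^ 2 := sq_sqrt (by nlinarith)
  have hs0 : 0 ≤ s := sqrt_nonneg _
  have hAM : M ^ 2 * χ ^ 2 ≤ M ^ 2 := by nlinarith
  have hMr : M ≤ M * (1 + s) := by nlinarith
  rw [setIntegral_congr_fun measurableSet_Ioi fun r hr =>
      integral_pontryagin_angular M χ r (hM.trans_le (hMr.trans hr.le)).ne',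
    integral_const_mul, integral_Ioi_radialDensity (by positivity) hM.le hAM hMr, radialPrimitive]
  have hhorizon : (M * (1 + s)) ^ 2 + M ^ 2 * χ ^ 2 = 2 * M * (M * (1 + s)) := by
    linear_combination M ^ 2 * hs2
  have h1s : 0 < 1 + s := by linarith
  rw [hhorizon]
  field_simp
  grind
end
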